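/- Let λ > 0, λ_e > 0, c > 0 be real numbers. There exists a constant C > 0 such that for every natural number n ≥ 2, if v : ℕ → ℝ satisfies, for every j with 1 ≤ j ≤ n, either the disconnected recursion v(j) = (λ_e + j(n−j)(λ/c)·v(j+1)) / (jλ/n + jλ/c + j(n−j)λ/c) or the fully connected recursion v(j) = (λ_e + j(n−j)(λ/(n−1) + λ/c)·v(j+1)) / (jλ/n + jλ/c + j(n−j)(λ/(n−1) + λ/c)), then v(1) ≤ C·(ln n)/n. (This is the constant f(n) = c case of the scaling lemma: v(1) = O((ln n)/n) for both topologies.) -/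

import Mathlib

/-!
Write `a⁺ = max a 0`. Since the recursion makes `v j` a weighted average of `v (j + 1)` and a
source term, each step down from `j + 1` to `j` raises `(v j)⁺` by at most
`λ_e / (j (n - j) λ / c)`, while `v n ≤ c λ_e / (n λ)`. Telescoping,
`v 1 ≤ (c λ_e / λ) (∑_{j < n} 1 / (j (n - j)) + 1 / n)`, and by partial fractions the sum is
`2 H_{n-1} / n ≤ 2 (1 + ln n) / n`.
-/

open Finset Real

lemma max_zero_le_div_add_max_zero {v w e b p : ℝ} (hb : 0 < b) (hp : 0 ≤ p) (he : 0 ≤ e)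
    (hv : v = (e + p * w) / (b + p)) : max v 0 ≤ e / (b + p) + max w 0 := by
  have hbp : 0 < b + p := by linarith
  refine max_le ?_ (by positivity)
  rw [hv, add_div]
  gcongr
  calc p * w / (b + p) ≤ p * max w 0 / (b + p) := by gcongr; exact le_max_left w 0
    _ ≤ max w 0 := by rw [div_le_iff₀ hbp]; nlinarith [le_max_right w 0]

lemma le_sum_Ico_add_of_le_add {u d : ℕ → ℝ} {m k : ℕ} (hmk : m ≤ k)
    (h : ∀ j ∈ Ico m k, u j ≤ d j + u (j + 1)) : u m ≤ ∑ j ∈ Ico m k, d j + u k := by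
  induction k, hmk using Nat.le_induction with
  | base => simp
  | succ k hmk ih =>
    have hk := h k (mem_Ico.2 ⟨hmk, k.lt_succ_self⟩)
    have hm := ih fun j hj => h j (Ico_subset_Ico_right k.le_succ hj)
    rw [sum_Ico_succ_top hmk]
    linarith

lemma sum_Ico_one_inv_le_one_add_log (n : ℕ) : ∑ j ∈ Ico 1 n, (j : ℝ)⁻¹ ≤ 1 + log n :=
  calc ∑ j ∈ Ico 1 n, (j : ℝ)⁻¹ ≤ ∑ j ∈ Icc 1 n, (j : ℝ)⁻¹ :=
        sum_le_sum_of_subset_of_nonneg Ico_subset_Icc_self fun _ _ _ => by positivity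
    _ = harmonic n := by simp [harmonic_eq_sum_Icc]
    _ ≤ 1 + log n := harmonic_le_one_add_log n

lemma sum_Ico_inv_mul_sub (n : ℕ) :
    ∑ j ∈ Ico 1 n, ((j : ℝ) * (n - j))⁻¹ = 2 / n * ∑ j ∈ Ico 1 n, (j : ℝ)⁻¹ := by
  have partial_fractions : ∀ j ∈ Ico 1 n,
      ((j : ℝ) * (n - j))⁻¹ = ((j : ℝ)⁻¹ + ((n : ℝ) - j)⁻¹) / n := by
    intro j hj
    obtain ⟨hj1, hjn⟩ := mem_Ico.1 hj
    have hj0 : (0 : ℝ) < j := by exact_mod_cast hj1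
    have hnj : (j : ℝ) < n := by exact_mod_cast hjn
    have hn : (n : ℝ) ≠ 0 := by linarith
    field_simp [sub_ne_zero.2 hnj.ne']
    ring
  have reflect : ∑ j ∈ Ico 1 n, ((n : ℝ) - j)⁻¹ = ∑ j ∈ Ico 1 n, (j : ℝ)⁻¹ :=
    sum_nbij' (n - ·) (n - ·) (by intro j hj; simp only [mem_Ico] at hj ⊢; omega)
      (by intro j hj; simp only [mem_Ico] at hj ⊢; omega)
      (by intro j hj; simp only [mem_Ico] at hj; omega)
      (by intro j hj; simp only [mem_Ico] at hj; omega)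
      (by intro j hj; simp only [mem_Ico] at hj; rw [Nat.cast_sub hj.2.le])
  rw [sum_congr rfl partial_fractions, ← sum_div, sum_add_distrib, reflect]
  ring

/-- `g` is the total contact rate of a pair of nodes (gossip plus mobility); the two topologies
differ only in `g`. -/
def IsAgeRecursion (lam lamE c g : ℝ) (n : ℕ) (v : ℕ → ℝ) : Prop :=
  ∀ j : ℕ, 1 ≤ j → j ≤ n →
    v j = (lamE + (j : ℝ) * ((n : ℝ) - j) * g * v (j + 1)) /
      ((j : ℝ) * lam / n + (j : ℝ) * lam / c + (j : ℝ) * ((n : ℝ) - j) * g)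

section IsAgeRecursion

variable {lam lamE c g : ℝ} {n : ℕ} {v : ℕ → ℝ}

lemma IsAgeRecursion.max_zero_le_add_max_zero_succ (hv : IsAgeRecursion lam lamE c g n v)
    (hlam : 0 < lam) (hlamE : 0 ≤ lamE) (hc : 0 < c) (hg : lam / c ≤ g) {j : ℕ}
    (hj : j ∈ Ico 1 n) :
    max (v j) 0 ≤ c * lamE / lam * ((j : ℝ) * (n - j))⁻¹ + max (v (j + 1)) 0 := by
  obtain ⟨hj1, hjn⟩ := mem_Ico.1 hj
  have hj0 : (0 : ℝ) < j := by exact_mod_cast hj1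
  have hnj : (1 : ℝ) ≤ n - j := by
    have : ((j + 1 : ℕ) : ℝ) ≤ n := by exact_mod_cast hjn
    push_cast at this
    linarith
  have hg0 : 0 < g := (div_pos hlam hc).trans_le hg
  have hb : 0 < (j : ℝ) * lam / n + j * lam / c := by positivity
  have hp : 0 ≤ (j : ℝ) * (n - j) * g := mul_nonneg (by positivity) hg0.le
  refine (max_zero_le_div_add_max_zero hb hp hlamE (hv j hj1 hjn.le)).trans ?_
  gcongr
  calc lamE / ((j : ℝ) * lam / n + j * lam / c + j * (n - j) * g)
      ≤ lamE / (j * (n - j) * (lam / c)) := by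
        apply div_le_div_of_nonneg_left hlamE (by positivity)
        nlinarith [mul_le_mul_of_nonneg_left hg (by positivity : (0 : ℝ) ≤ j * (n - j))]
    _ = c * lamE / lam * ((j : ℝ) * (n - j))⁻¹ := by field_simp

lemma IsAgeRecursion.max_zero_le_last (hv : IsAgeRecursion lam lamE c g n v)
    (hlam : 0 < lam) (hlamE : 0 ≤ lamE) (hc : 0 < c) (hn : 1 ≤ n) :
    max (v n) 0 ≤ c * lamE / lam / n := by
  have hvn : v n = lamE / (lam + n * lam / c) := by
    rw [hv n hn le_rfl]
    field_simp
    ring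
  refine max_le ?_ (by positivity)
  rw [hvn, div_le_div_iff₀ (by positivity) (by positivity)]
  field_simp
  nlinarith [mul_nonneg hlamE hlam.le]

theorem IsAgeRecursion.le_log_div (hv : IsAgeRecursion lam lamE c g n v)
    (hlam : 0 < lam) (hlamE : 0 ≤ lamE) (hc : 0 < c) (hg : lam / c ≤ g) (hn : 1 ≤ n) :
    v 1 ≤ c * lamE / lam * (3 + 2 * log n) / n :=
  calc v 1 ≤ max (v 1) 0 := le_max_left _ _
    _ ≤ ∑ j ∈ Ico 1 n, c * lamE / lam * ((j : ℝ) * (n - j))⁻¹ + max (v n) 0 :=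
        le_sum_Ico_add_of_le_add (u := fun j => max (v j) 0) hn fun _ hj =>
          hv.max_zero_le_add_max_zero_succ hlam hlamE hc hg hj
    _ ≤ c * lamE / lam * (2 / n * (1 + log n)) + c * lamE / lam / n := by
        rw [← mul_sum, sum_Ico_inv_mul_sub]
        gcongr
        · exact sum_Ico_one_inv_le_one_add_log n
        · exact hv.max_zero_le_last hlam hlamE hc hn
    _ = c * lamE / lam * (3 + 2 * log n) / n := by ring

end IsAgeRecursion

/-- Scaling lemma, constant case `f(n) = c`: the version age of a single node is
`O((ln n)/n)` in both the disconnected and the fully connected topologies. -/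
theorem stmt_9 (lam lamE c : ℝ) (hlam : 0 < lam) (hlamE : 0 < lamE) (hc : 0 < c) :
    ∃ C : ℝ, 0 < C ∧ ∀ n : ℕ, 2 ≤ n → ∀ v : ℕ → ℝ,
      ((∀ j : ℕ, 1 ≤ j → j ≤ n →
          v j = (lamE + (j : ℝ) * ((n : ℝ) - j) * (lam / c) * v (j + 1)) /
            ((j : ℝ) * lam / n + (j : ℝ) * lam / c
              + (j : ℝ) * ((n : ℝ) - j) * lam / c)) ∨
       (∀ j : ℕ, 1 ≤ j → j ≤ n →
          v j = (lamE + (j : ℝ) * ((n : ℝ) - j) * (lam / ((n : ℝ) - 1) + lam / c) * v (j + 1)) /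
            ((j : ℝ) * lam / n + (j : ℝ) * lam / c
              + (j : ℝ) * ((n : ℝ) - j) * (lam / ((n : ℝ) - 1) + lam / c)))) →
      v 1 ≤ C * Real.log n / n := by
  have hlog2 : 0 < log 2 := log_pos one_lt_two
  refine ⟨c * lamE / lam * (2 + 3 / log 2), by positivity, fun n hn v hv => ?_⟩
  have hn' : (2 : ℝ) ≤ n := by exact_mod_cast hn
  have hv1 : v 1 ≤ c * lamE / lam * (3 + 2 * log n) / n := by
    rcases hv with hv | hv
    · have hv' : IsAgeRecursion lam lamE c (lam / c) n v := fun j hj1 hjn => by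
        rw [hv j hj1 hjn, mul_div_assoc ((j : ℝ) * ((n : ℝ) - j)) lam c]
      exact hv'.le_log_div hlam hlamE.le hc le_rfl (by omega)
    · have : 0 ≤ lam / ((n : ℝ) - 1) := div_nonneg hlam.le (by linarith)
      exact IsAgeRecursion.le_log_div hv hlam hlamE.le hc (by linarith) (by omega)
  have hlog : 3 + 2 * log n ≤ (2 + 3 / log 2) * log n := by
    have : 1 ≤ log n / log 2 := (one_le_div hlog2).2 (log_le_log two_pos hn')
    calc 3 + 2 * log n ≤ 3 * (log n / log 2) + 2 * log n := by linarith
      _ = (2 + 3 / log 2) * log n := by ring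
  calc v 1 ≤ c * lamE / lam * (3 + 2 * log n) / n := hv1
    _ ≤ c * lamE / lam * ((2 + 3 / log 2) * log n) / n := by gcongr
    _ = c * lamE / lam * (2 + 3 / log 2) * log n / n := by ring
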